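/- arXiv:0805.3824 — 4 statements merged into one kernel-verified Lean document; each statement's English description precedes it below -/
import Mathlib

section
/- Suppose the discrepancy function Δ of an adversarial channel is normal. Then for every code 𝒞 ⊆ 𝒳 with at least two codewords, τ(𝒞) = ⌊(δ(𝒞) − 1)/2⌋. -/
/-- `τ(x,x') + 1 = min_y max {Δ(x,y), Δ(x',y)}`. -/
noncomputable def tauPairSucc {𝒳 𝒴 : Type*} (Δ : 𝒳 → 𝒴 → ℕ) (x x' : 𝒳) : ℕ :=
  sInf {e : ℕ | ∃ y : 𝒴, e = max (Δ x y) (Δ x' y)}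

/-- `τ(𝒞) = (min over distinct pairs of codewords of (τ(x,x')+1)) − 1`,
as an integer; this is the minimum of `τ(x,x')` over distinct pairs. -/
noncomputable def tauCode {𝒳 𝒴 : Type*} (Δ : 𝒳 → 𝒴 → ℕ) (C : Set 𝒳) : ℤ :=
  ((sInf {e : ℕ | ∃ x ∈ C, ∃ x' ∈ C, x ≠ x' ∧ e = tauPairSucc Δ x x'} : ℕ) : ℤ) - 1

/-- The Δ-distance `δ(x,x') = min_y (Δ(x,y) + Δ(x',y))`. -/
noncomputable def deltaPair {𝒳 𝒴 : Type*} (Δ : 𝒳 → 𝒴 → ℕ) (x x' : 𝒳) : ℕ :=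
  sInf {e : ℕ | ∃ y : 𝒴, e = Δ x y + Δ x' y}

/-- `δ(𝒞)`: the minimum Δ-distance over pairs of distinct codewords. -/
noncomputable def deltaCode {𝒳 𝒴 : Type*} (Δ : 𝒳 → 𝒴 → ℕ) (C : Set 𝒳) : ℕ :=
  sInf {e : ℕ | ∃ x ∈ C, ∃ x' ∈ C, x ≠ x' ∧ e = deltaPair Δ x x'}

/-- A discrepancy function `Δ` is normal if for all `x, x'` and all
`0 ≤ i ≤ δ(x,x')` there is an output `y` with `Δ(x,y) = i` and
`Δ(x',y) = δ(x,x') − i`. -/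
def IsNormal {𝒳 𝒴 : Type*} (Δ : 𝒳 → 𝒴 → ℕ) : Prop :=
  ∀ x x' : 𝒳, ∀ i : ℕ, i ≤ deltaPair Δ x x' →
    ∃ y : 𝒴, Δ x y = i ∧ Δ x' y = deltaPair Δ x x' - i

/-! Since `max a b ≥ ⌈(a + b) / 2⌉`, every output `y` gives `τ(x,x') + 1 ≥ ⌈δ(x,x') / 2⌉`, and
normality supplies an output splitting `δ(x,x')` as evenly as possible, so
`τ(x,x') + 1 = ⌈δ(x,x') / 2⌉` for every pair. Passing to the code, the minimum commutes with the
monotone map `d ↦ ⌈d / 2⌉`. -/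

section Pair

variable {𝒳 𝒴 : Type*} (Δ : 𝒳 → 𝒴 → ℕ)

lemma deltaPair_le_add (x x' : 𝒳) (y : 𝒴) : deltaPair Δ x x' ≤ Δ x y + Δ x' y :=
  Nat.sInf_le ⟨y, rfl⟩

lemma tauPairSucc_le_max (x x' : 𝒳) (y : 𝒴) : tauPairSucc Δ x x' ≤ max (Δ x y) (Δ x' y) :=
  Nat.sInf_le ⟨y, rfl⟩

lemma half_deltaPair_le_max (x x' : 𝒳) (y : 𝒴) :
    (deltaPair Δ x x' + 1) / 2 ≤ max (Δ x y) (Δ x' y) := by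
  have := deltaPair_le_add Δ x x' y
  omega

variable {Δ}

lemma IsNormal.tauPairSucc_eq (hΔ : IsNormal Δ) (x x' : 𝒳) :
    tauPairSucc Δ x x' = (deltaPair Δ x x' + 1) / 2 := by
  obtain ⟨y, hxy, hx'y⟩ := hΔ x x' ((deltaPair Δ x x' + 1) / 2) (by omega)
  apply le_antisymm
  · calc tauPairSucc Δ x x' ≤ max (Δ x y) (Δ x' y) := tauPairSucc_le_max Δ x x' y
      _ = (deltaPair Δ x x' + 1) / 2 := by omega
  · refine le_csInf ⟨_, y, rfl⟩ ?_
    rintro _ ⟨z, rfl⟩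
    exact half_deltaPair_le_max Δ x x' z

end Pair

lemma Set.setOf_exists_ne_eq_image_offDiag {α β : Type*} (C : Set α) (f : α → α → β) :
    {e | ∃ x ∈ C, ∃ x' ∈ C, x ≠ x' ∧ e = f x x'} = Function.uncurry f '' C.offDiag := by
  ext e
  simp [and_assoc, eq_comm]

theorem tauCode_eq_half_deltaCode_general {𝒳 𝒴 : Type*} (Δ : 𝒳 → 𝒴 → ℕ) (hΔ : IsNormal Δ) (C : Set 𝒳)
    (hC : ∃ x ∈ C, ∃ x' ∈ C, x ≠ x') :
    tauCode Δ C = ((deltaCode Δ C : ℤ) - 1) / 2 := by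
  have hpair : Function.uncurry (tauPairSucc Δ) =
      (fun d => (d + 1) / 2) ∘ Function.uncurry (deltaPair Δ) :=
    funext fun p => hΔ.tauPairSucc_eq p.1 p.2
  have hoffDiag : C.offDiag.Nonempty := by
    obtain ⟨x, hx, x', hx', hne⟩ := hC
    exact ⟨(x, x'), hx, hx', hne⟩
  have hhalf : Monotone fun d : ℕ => (d + 1) / 2 := fun a b hab => by dsimp only; omega
  rw [tauCode, deltaCode, Set.setOf_exists_ne_eq_image_offDiag,
    Set.setOf_exists_ne_eq_image_offDiag, hpair, Set.image_comp,
    ← hhalf.map_csInf (hoffDiag.image _)]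
  omega

/-- If `Δ` is normal, then for every code with at least two codewords,
`τ(𝒞) = ⌊(δ(𝒞) − 1)/2⌋`. -/
theorem tauCode_eq_half_deltaCode {𝒳 𝒴 : Type*} [Fintype 𝒳] [Fintype 𝒴]
    [Nonempty 𝒳] [Nonempty 𝒴] (Δ : 𝒳 → 𝒴 → ℕ) (hΔ : IsNormal Δ) (C : Set 𝒳)
    (hC : ∃ x ∈ C, ∃ x' ∈ C, x ≠ x') :
    tauCode Δ C = ((deltaCode Δ C : ℤ) - 1) / 2 :=
  tauCode_eq_half_deltaCode_general Δ hΔ C hC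
end

section
/- Let A ∈ 𝔽_q^{N×n} have column-rank deficiency ρ = n − rank A, and let 𝒞 ⊆ 𝔽_q^{n×m} be a code with at least two codewords. Then d_R(𝒞) − ρ ≤ δ_A(𝒞) ≤ d_R(𝒞); moreover the same two inequalities hold pairwise: d_R(X,X') − ρ ≤ δ_A(X,X') ≤ d_R(X,X') for all X, X' ∈ 𝔽_q^{n×m}. -/
/-- The coherent discrepancy `Δ_A(X,Y)`: the least `r` such that
`Y = AX + DZ` for some `D ∈ 𝔽_q^{N×r}` and `Z ∈ 𝔽_q^{r×m}`. -/
noncomputable def discA {K : Type*} [Field K] [Fintype K] {n m N : ℕ}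
    (A : Matrix (Fin N) (Fin n) K) (X : Matrix (Fin n) (Fin m) K)
    (Y : Matrix (Fin N) (Fin m) K) : ℕ :=
  sInf {r : ℕ | ∃ D : Matrix (Fin N) (Fin r) K, ∃ Z : Matrix (Fin r) (Fin m) K,
    Y = A * X + D * Z}

/-- The Δ-distance `δ_A(X,X') = min_Y (Δ_A(X,Y) + Δ_A(X',Y))`. -/
noncomputable def deltaA {K : Type*} [Field K] [Fintype K] {n m N : ℕ}
    (A : Matrix (Fin N) (Fin n) K) (X X' : Matrix (Fin n) (Fin m) K) : ℕ :=
  sInf {e : ℕ | ∃ Y : Matrix (Fin N) (Fin m) K, e = discA A X Y + discA A X' Y}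

/-- `δ_A(𝒞)`: the minimum Δ-distance over pairs of distinct codewords. -/
noncomputable def deltaACode {K : Type*} [Field K] [Fintype K] {n m N : ℕ}
    (A : Matrix (Fin N) (Fin n) K) (C : Set (Matrix (Fin n) (Fin m) K)) : ℕ :=
  sInf {e : ℕ | ∃ X ∈ C, ∃ X' ∈ C, X ≠ X' ∧ e = deltaA A X X'}

/-- The minimum rank distance `d_R(𝒞)` over pairs of distinct codewords,
where `d_R(X,X') = rank (X' − X)`. -/
noncomputable def rankDistCode {K : Type*} [Field K] [Fintype K] {n m : ℕ}
    (C : Set (Matrix (Fin n) (Fin m) K)) : ℕ :=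
  sInf {e : ℕ | ∃ X ∈ C, ∃ X' ∈ C, X ≠ X' ∧ e = (X' - X).rank}

/-!
A matrix factors through `𝔽_q^r` exactly when its rank is at most `r`, so `Δ_A(X,Y)` is the
rank of `Y - AX`. Taking `Y = AX'` gives `δ_A(X,X') ≤ rank (A(X' - X)) ≤ rank (X' - X)`.
Conversely, for every `Y` we have `A(X' - X) = (Y - AX) - (Y - AX')`, so subadditivity of rank
bounds `rank (A(X' - X))` by `Δ_A(X,Y) + Δ_A(X',Y)`, while multiplying by `A` lowers the rank
by at most `dim ker A = ρ`. The bounds for codes follow by minimising over pairs of codewords.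
-/

open Matrix LinearMap Module

section LinearAlgebra

variable {K V W : Type*} [Field K] [AddCommGroup V] [Module K V] [AddCommGroup W] [Module K W]

theorem LinearMap.exists_eq_comp_of_finrank_range_le [FiniteDimensional K W] (f : V →ₗ[K] W)
    {r : ℕ} (hr : finrank K (range f) ≤ r) :
    ∃ (g : V →ₗ[K] Fin r → K) (h : (Fin r → K) →ₗ[K] W), f = h ∘ₗ g := by
  let b := finBasis K (range f)
  let p : (Fin r → K) →ₗ[K] range f :=
    b.equivFun.symm.toLinearMap ∘ₗ funLeft K K (Fin.castLE hr)
  have hp : Function.Surjective p := b.equivFun.symm.surjective.comp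
    (funLeft_surjective_of_injective K K _ (Fin.castLE_injective hr))
  obtain ⟨g, hg⟩ := Module.projective_lifting_property p f.rangeRestrict hp
  exact ⟨g, (range f).subtype ∘ₗ p, by rw [comp_assoc, hg, subtype_comp_codRestrict]⟩

theorem Submodule.finrank_le_finrank_map_add_finrank_ker [FiniteDimensional K V]
    (f : V →ₗ[K] W) (p : Submodule K V) :
    finrank K p ≤ finrank K (p.map f) + finrank K (ker f) := by
  have hrn := finrank_range_add_finrank_ker (f.domRestrict p)
  rw [range_domRestrict, ker_domRestrict] at hrn
  have hker : finrank K ((ker f).comap p.subtype) ≤ finrank K (ker f) := by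
    rw [← Submodule.finrank_map_subtype_eq]
    exact Submodule.finrank_mono (Submodule.map_comap_le _ _)
  omega

end LinearAlgebra

namespace Matrix

variable {K : Type*} [Field K] {l m n : Type*} [Fintype n]

theorem exists_eq_mul_iff_rank_le [Finite m] [DecidableEq n] (M : Matrix m n K) (r : ℕ) :
    (∃ (D : Matrix m (Fin r) K) (Z : Matrix (Fin r) n K), M = D * Z) ↔ M.rank ≤ r := by
  constructor
  · rintro ⟨D, Z, rfl⟩
    exact (rank_mul_le_left D Z).trans ((rank_le_card_width D).trans_eq (Fintype.card_fin r))
  · intro hr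
    obtain ⟨g, h, hgh⟩ := M.mulVecLin.exists_eq_comp_of_finrank_range_le hr
    refine ⟨toMatrix' h, toMatrix' g, ?_⟩
    rw [← toMatrix'_comp, ← hgh, ← toLin'_apply', toMatrix'_toLin']

theorem rank_add_le (M M' : Matrix m n K) : (M + M').rank ≤ M.rank + M'.rank := by
  have := LinearMap.rank_add_le M.mulVecLin M'.mulVecLin
  rw [← mulVecLin_add] at this
  unfold LinearMap.rank at this
  rw [← finrank_eq_rank, ← finrank_eq_rank, ← finrank_eq_rank] at this
  exact_mod_cast this

theorem rank_neg (M : Matrix m n K) : (-M).rank = M.rank := by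
  have hneg : (-M).mulVecLin = -M.mulVecLin := by
    ext v i
    simp
  rw [Matrix.rank, Matrix.rank, hneg, range_neg]

theorem rank_le_rank_mul_add_card_sub_rank {o : Type*} [Fintype o] (A : Matrix l n K)
    (B : Matrix n o K) : B.rank ≤ (A * B).rank + (Fintype.card n - A.rank) := by
  have hker : finrank K (ker A.mulVecLin) = Fintype.card n - A.rank := by
    have := finrank_range_add_finrank_ker A.mulVecLin
    rw [finrank_fintype_fun_eq_card] at this
    exact (Nat.sub_eq_of_eq_add' this.symm).symm
  rw [← hker, Matrix.rank, Matrix.rank, mulVecLin_mul, range_comp]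
  exact Submodule.finrank_le_finrank_map_add_finrank_ker _ _

end Matrix

section Discrepancy

variable {K : Type*} [Field K] [Fintype K] {n m N : ℕ} (A : Matrix (Fin N) (Fin n) K)

theorem discA_eq_rank_sub (X : Matrix (Fin n) (Fin m) K) (Y : Matrix (Fin N) (Fin m) K) :
    discA A X Y = (Y - A * X).rank := by
  have hset : {r : ℕ | ∃ (D : Matrix (Fin N) (Fin r) K) (Z : Matrix (Fin r) (Fin m) K),
      Y = A * X + D * Z} = Set.Ici (Y - A * X).rank := by
    ext r
    simp only [Set.mem_Ici, ← exists_eq_mul_iff_rank_le, Set.mem_ofPred_eq, eq_sub_iff_add_eq',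
      eq_comm]
  rw [discA, hset, csInf_Ici]

variable (X X' : Matrix (Fin n) (Fin m) K)

theorem deltaA_le_discA_add_discA (Y : Matrix (Fin N) (Fin m) K) :
    deltaA A X X' ≤ discA A X Y + discA A X' Y :=
  Nat.sInf_le ⟨Y, rfl⟩

theorem exists_deltaA_eq_discA_add_discA :
    ∃ Y : Matrix (Fin N) (Fin m) K, deltaA A X X' = discA A X Y + discA A X' Y :=
  Nat.sInf_mem (s := {e | ∃ Y, e = discA A X Y + discA A X' Y}) ⟨_, A * X', rfl⟩

theorem deltaA_le_rank_sub : deltaA A X X' ≤ (X' - X).rank := by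
  refine (deltaA_le_discA_add_discA A X X' (A * X')).trans ?_
  rw [discA_eq_rank_sub, discA_eq_rank_sub, sub_self, Matrix.rank_zero, add_zero,
    ← Matrix.mul_sub]
  exact rank_mul_le_right A (X' - X)

theorem rank_sub_le_deltaA_add : (X' - X).rank ≤ deltaA A X X' + (n - A.rank) := by
  obtain ⟨Y, hY⟩ := exists_deltaA_eq_discA_add_discA A X X'
  have hsplit : A * (X' - X) = (Y - A * X) + -(Y - A * X') := by
    rw [Matrix.mul_sub]; abel
  have htri : (A * (X' - X)).rank ≤ discA A X Y + discA A X' Y := by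
    rw [discA_eq_rank_sub, discA_eq_rank_sub, hsplit, ← rank_neg (Y - A * X')]
    exact rank_add_le _ _
  have := rank_le_rank_mul_add_card_sub_rank A (X' - X)
  rw [Fintype.card_fin] at this
  omega

end Discrepancy

theorem sInf_pairs_le_sInf_pairs_add {α : Type*} {C : Set α} {f g : α → α → ℕ} {c : ℕ}
    (h : ∀ X ∈ C, ∀ X' ∈ C, X ≠ X' → f X X' ≤ g X X' + c) :
    sInf {e | ∃ X ∈ C, ∃ X' ∈ C, X ≠ X' ∧ e = f X X'} ≤
      sInf {e | ∃ X ∈ C, ∃ X' ∈ C, X ≠ X' ∧ e = g X X'} + c := by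
  by_cases hg : {e | ∃ X ∈ C, ∃ X' ∈ C, X ≠ X' ∧ e = g X X'}.Nonempty
  · obtain ⟨X, hX, X', hX', hne, hmin⟩ := Nat.sInf_mem hg
    rw [hmin]
    exact le_trans (Nat.sInf_le ⟨X, hX, X', hX', hne, rfl⟩) (h X hX X' hX' hne)
  · have hf : {e | ∃ X ∈ C, ∃ X' ∈ C, X ≠ X' ∧ e = f X X'} = ∅ :=
      Set.eq_empty_of_forall_notMem fun _ ⟨X, hX, X', hX', hne, _⟩ =>
        hg ⟨_, X, hX, X', hX', hne, rfl⟩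
    simp [hf]

theorem deltaA_rank_bounds_general {K : Type*} [Field K] [Fintype K] {n m N : ℕ}
    (A : Matrix (Fin N) (Fin n) K) (ρ : ℕ) (hρ : ρ = n - A.rank)
    (C : Set (Matrix (Fin n) (Fin m) K)) :
    ((rankDistCode C : ℤ) - ρ ≤ deltaACode A C ∧ deltaACode A C ≤ rankDistCode C) ∧
      ∀ X X' : Matrix (Fin n) (Fin m) K,
        ((X' - X).rank : ℤ) - ρ ≤ deltaA A X X' ∧ deltaA A X X' ≤ (X' - X).rank := by
  subst hρ
  have hlower : rankDistCode C ≤ deltaACode A C + (n - A.rank) :=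
    sInf_pairs_le_sInf_pairs_add (f := fun X X' => (X' - X).rank) (g := deltaA A)
      fun X _ X' _ _ => rank_sub_le_deltaA_add A X X'
  have hupper : deltaACode A C ≤ rankDistCode C + 0 :=
    sInf_pairs_le_sInf_pairs_add (f := deltaA A) (g := fun X X' => (X' - X).rank)
      fun X _ X' _ _ => deltaA_le_rank_sub A X X'
  refine ⟨⟨by omega, by omega⟩, fun X X' => ⟨?_, ?_⟩⟩
  · have := rank_sub_le_deltaA_add A X X'
    omega
  · exact_mod_cast deltaA_le_rank_sub A X X'

/-- `d_R(𝒞) − ρ ≤ δ_A(𝒞) ≤ d_R(𝒞)` where `ρ = n − rank A`, and the same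
inequalities hold pairwise: `d_R(X,X') − ρ ≤ δ_A(X,X') ≤ d_R(X,X')`. -/
theorem deltaA_rank_bounds {K : Type*} [Field K] [Fintype K] {n m N : ℕ}
    (hn : 0 < n) (hm : 0 < m) (hN : 0 < N)
    (A : Matrix (Fin N) (Fin n) K) (ρ : ℕ) (hρ : ρ = n - A.rank)
    (C : Set (Matrix (Fin n) (Fin m) K)) (hC : ∃ X ∈ C, ∃ X' ∈ C, X ≠ X') :
    ((rankDistCode C : ℤ) - ρ ≤ deltaACode A C ∧ deltaACode A C ≤ rankDistCode C) ∧
      ∀ X X' : Matrix (Fin n) (Fin m) K,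
        ((X' - X).rank : ℤ) - ρ ≤ deltaA A X X' ∧ deltaA A X X' ≤ (X' - X).rank :=
  deltaA_rank_bounds_general A ρ hρ C
end

section
/- Let A ∈ 𝔽_q^{N×n} and suppose ℓ ≥ N. Then for all X ∈ 𝔽_q^{n×m} and Y ∈ 𝔽_q^{N×m}, Δ_A(X,Y) = min over F ∈ 𝔽_q^{N×ℓ} of Δ_{A,F}(X,Y); consequently, for all X, X' ∈ 𝔽_q^{n×m}, δ_A(X,X') = min over F ∈ 𝔽_q^{N×ℓ} of δ_{A,F}(X,X'), and for every code 𝒞 ⊆ 𝔽_q^{n×m} with at least two codewords, δ_A(𝒞) = min over F ∈ 𝔽_q^{N×ℓ} of δ_{A,F}(𝒞). -/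
/-- `wt(E)`: the number of nonzero rows of a matrix `E`. -/
noncomputable def wtRows {K : Type*} [Field K] {a b : ℕ}
    (E : Matrix (Fin a) (Fin b) K) : ℕ :=
  {i : Fin a | E i ≠ 0}.ncard

/-- The discrepancy `Δ_{A,F}(X,Y) = min { wt(E) : Y = AX + FE } ∈ ℕ ∪ {∞}`. -/
noncomputable def discAF {K : Type*} [Field K] [Fintype K] {n m N l : ℕ}
    (A : Matrix (Fin N) (Fin n) K) (F : Matrix (Fin N) (Fin l) K)
    (X : Matrix (Fin n) (Fin m) K) (Y : Matrix (Fin N) (Fin m) K) : ℕ∞ :=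
  sInf {c : ℕ∞ | ∃ E : Matrix (Fin l) (Fin m) K, Y = A * X + F * E ∧ c = (wtRows E : ℕ∞)}

/-- The Δ-distance `δ_{A,F}(X₁,X₂) = min_Y (Δ_{A,F}(X₁,Y) + Δ_{A,F}(X₂,Y))`. -/
noncomputable def deltaAF {K : Type*} [Field K] [Fintype K] {n m N l : ℕ}
    (A : Matrix (Fin N) (Fin n) K) (F : Matrix (Fin N) (Fin l) K)
    (X₁ X₂ : Matrix (Fin n) (Fin m) K) : ℕ∞ :=
  sInf {c : ℕ∞ | ∃ Y : Matrix (Fin N) (Fin m) K, c = discAF A F X₁ Y + discAF A F X₂ Y}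

/-- `δ_{A,F}(𝒞)`: the minimum of `δ_{A,F}` over pairs of distinct codewords. -/
noncomputable def deltaAFCode {K : Type*} [Field K] [Fintype K] {n m N l : ℕ}
    (A : Matrix (Fin N) (Fin n) K) (F : Matrix (Fin N) (Fin l) K)
    (C : Set (Matrix (Fin n) (Fin m) K)) : ℕ∞ :=
  sInf {c : ℕ∞ | ∃ X ∈ C, ∃ X' ∈ C, X ≠ X' ∧ c = deltaAF A F X X'}

theorem iInf_eq_of_forall_ge_of_exists_le {α ι : Type*} [CompleteLattice α] {f : ι → α} {a : α}
    (h₁ : ∀ i, a ≤ f i) (h₂ : ∃ i, f i ≤ a) : ⨅ i, f i = a :=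
  le_antisymm (h₂.elim fun i hi => iInf_le_of_le i hi) (le_iInf h₁)

namespace Matrix

variable {R ι κ μ ν : Type*}

theorem submatrix_mul_submatrix_of_forall_notMem_range [NonUnitalNonAssocSemiring R] [Fintype ι]
    [Fintype κ] (F : Matrix μ κ R) (E : Matrix κ ν R) {e : ι → κ} (he : Function.Injective e)
    (hE : ∀ i ∉ Set.range e, E i = 0) : F.submatrix id e * E.submatrix e id = F * E := by
  ext j c
  exact Fintype.sum_of_injective e he _ _ (fun i hi => by simp [hE i hi]) (fun _ => rfl)

theorem exists_submatrix_id_eq [Zero R] (D : Matrix μ ι R) {e : ι → κ}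
    (he : Function.Injective e) : ∃ F : Matrix μ κ R, F.submatrix id e = D :=
  ⟨of fun j => Function.extend e (D j) 0, by ext j k; simp [he.extend_apply]⟩

end Matrix

section Discrepancy

open Matrix

variable {K : Type*} [Field K] {n m N l : ℕ}

theorem wtRows_le_card_of_forall_notMem_range {ι : Type*} [Fintype ι]
    (E : Matrix (Fin l) (Fin m) K) {e : ι → Fin l} (hE : ∀ i ∉ Set.range e, E i = 0) :
    wtRows E ≤ Fintype.card ι :=
  calc wtRows E ≤ (Set.range e).ncard :=
        Set.ncard_le_ncard (fun i hi => by_contra fun h => hi (hE i h))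
    _ ≤ Fintype.card ι := by
        rw [← Set.image_univ, ← Nat.card_eq_fintype_card, ← Set.ncard_univ]
        exact Set.ncard_image_le

variable [Fintype K]

theorem discA_spec (A : Matrix (Fin N) (Fin n) K) (X : Matrix (Fin n) (Fin m) K)
    (Y : Matrix (Fin N) (Fin m) K) :
    ∃ D : Matrix (Fin N) (Fin (discA A X Y)) K, ∃ Z : Matrix (Fin (discA A X Y)) (Fin m) K,
      Y = A * X + D * Z :=
  Nat.sInf_mem (s := {r | ∃ D : Matrix (Fin N) (Fin r) K, ∃ Z : Matrix (Fin r) (Fin m) K,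
    Y = A * X + D * Z}) ⟨N, 1, Y - A * X, by simp⟩

theorem discA_le (A : Matrix (Fin N) (Fin n) K) (X : Matrix (Fin n) (Fin m) K)
    (Y : Matrix (Fin N) (Fin m) K) : discA A X Y ≤ N :=
  Nat.sInf_le ⟨1, Y - A * X, by simp⟩

theorem discA_mul_self (A : Matrix (Fin N) (Fin n) K) (X : Matrix (Fin n) (Fin m) K) :
    discA A X (A * X) = 0 :=
  Nat.eq_zero_of_le_zero (Nat.sInf_le ⟨0, 0, by simp⟩)

theorem discAF_le_wtRows {A : Matrix (Fin N) (Fin n) K} {F : Matrix (Fin N) (Fin l) K}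
    {X : Matrix (Fin n) (Fin m) K} {Y : Matrix (Fin N) (Fin m) K} {E : Matrix (Fin l) (Fin m) K}
    (hY : Y = A * X + F * E) : discAF A F X Y ≤ wtRows E :=
  sInf_le (show (wtRows E : ℕ∞) ∈ {c : ℕ∞ | ∃ E : Matrix (Fin l) (Fin m) K,
    Y = A * X + F * E ∧ c = (wtRows E : ℕ∞)} from ⟨E, hY, rfl⟩)

theorem deltaA_spec (A : Matrix (Fin N) (Fin n) K) (X X' : Matrix (Fin n) (Fin m) K) :
    ∃ Y : Matrix (Fin N) (Fin m) K, deltaA A X X' = discA A X Y + discA A X' Y :=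
  Nat.sInf_mem (s := {e | ∃ Y : Matrix (Fin N) (Fin m) K, e = discA A X Y + discA A X' Y})
    ⟨_, A * X, rfl⟩

theorem deltaA_le_discA_add (A : Matrix (Fin N) (Fin n) K) (X X' : Matrix (Fin n) (Fin m) K)
    (Y : Matrix (Fin N) (Fin m) K) : deltaA A X X' ≤ discA A X Y + discA A X' Y :=
  Nat.sInf_le ⟨Y, rfl⟩

theorem deltaA_le (A : Matrix (Fin N) (Fin n) K) (X X' : Matrix (Fin n) (Fin m) K) :
    deltaA A X X' ≤ N :=
  calc deltaA A X X' ≤ discA A X (A * X) + discA A X' (A * X) := deltaA_le_discA_add A X X' _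
    _ ≤ N := by rw [discA_mul_self, zero_add]; exact discA_le A X' (A * X)

theorem deltaAF_le_discAF_add (A : Matrix (Fin N) (Fin n) K) (F : Matrix (Fin N) (Fin l) K)
    (X X' : Matrix (Fin n) (Fin m) K) (Y : Matrix (Fin N) (Fin m) K) :
    deltaAF A F X X' ≤ discAF A F X Y + discAF A F X' Y :=
  sInf_le (show discAF A F X Y + discAF A F X' Y ∈ {c : ℕ∞ | ∃ Y : Matrix (Fin N) (Fin m) K,
    c = discAF A F X Y + discAF A F X' Y} from ⟨Y, rfl⟩)

theorem deltaACode_spec (A : Matrix (Fin N) (Fin n) K) {C : Set (Matrix (Fin n) (Fin m) K)}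
    (hC : ∃ X ∈ C, ∃ X' ∈ C, X ≠ X') :
    ∃ X ∈ C, ∃ X' ∈ C, X ≠ X' ∧ deltaACode A C = deltaA A X X' :=
  let ⟨X, hX, X', hX', hne⟩ := hC
  Nat.sInf_mem (s := {e | ∃ X ∈ C, ∃ X' ∈ C, X ≠ X' ∧ e = deltaA A X X'})
    ⟨_, X, hX, X', hX', hne, rfl⟩

theorem deltaACode_le {A : Matrix (Fin N) (Fin n) K} {C : Set (Matrix (Fin n) (Fin m) K)}
    {X X' : Matrix (Fin n) (Fin m) K} (hX : X ∈ C) (hX' : X' ∈ C) (hne : X ≠ X') :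
    deltaACode A C ≤ deltaA A X X' :=
  Nat.sInf_le ⟨X, hX, X', hX', hne, rfl⟩

theorem deltaAFCode_le {A : Matrix (Fin N) (Fin n) K} (F : Matrix (Fin N) (Fin l) K)
    {C : Set (Matrix (Fin n) (Fin m) K)} {X X' : Matrix (Fin n) (Fin m) K} (hX : X ∈ C)
    (hX' : X' ∈ C) (hne : X ≠ X') : deltaAFCode A F C ≤ deltaAF A F X X' :=
  sInf_le (show deltaAF A F X X' ∈ {c : ℕ∞ | ∃ X ∈ C, ∃ X' ∈ C, X ≠ X' ∧
    c = deltaAF A F X X'} from ⟨X, hX, X', hX', hne, rfl⟩)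

theorem discA_le_wtRows {A : Matrix (Fin N) (Fin n) K} {F : Matrix (Fin N) (Fin l) K}
    {X : Matrix (Fin n) (Fin m) K} {Y : Matrix (Fin N) (Fin m) K} {E : Matrix (Fin l) (Fin m) K}
    (hY : Y = A * X + F * E) : discA A X Y ≤ wtRows E := by
  let e : Fin (wtRows E) → Fin l := Subtype.val ∘ (Finite.equivFin {i | E i ≠ 0}).symm
  have he : Function.Injective e := Subtype.val_injective.comp (Equiv.injective _)
  have hE : ∀ i ∉ Set.range e, E i = 0 := fun i hi => by
    by_contra h
    exact hi ⟨Finite.equivFin {i | E i ≠ 0} ⟨i, h⟩,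
      congrArg Subtype.val ((Finite.equivFin _).symm_apply_apply _)⟩
  exact Nat.sInf_le ⟨F.submatrix id e, E.submatrix e id,
    by rw [submatrix_mul_submatrix_of_forall_notMem_range F E he hE, hY]⟩

theorem discA_le_discAF (A : Matrix (Fin N) (Fin n) K) (F : Matrix (Fin N) (Fin l) K)
    (X : Matrix (Fin n) (Fin m) K) (Y : Matrix (Fin N) (Fin m) K) :
    (discA A X Y : ℕ∞) ≤ discAF A F X Y :=
  le_sInf fun _ ⟨_, hY, hc⟩ => hc ▸ Nat.cast_le.mpr (discA_le_wtRows hY)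

theorem discAF_le_card {ι : Type*} [Fintype ι] {A : Matrix (Fin N) (Fin n) K}
    {F : Matrix (Fin N) (Fin l) K} {X : Matrix (Fin n) (Fin m) K} {Y : Matrix (Fin N) (Fin m) K}
    {e : ι → Fin l} (he : Function.Injective e) {Z : Matrix ι (Fin m) K}
    (hY : Y = A * X + F.submatrix id e * Z) : discAF A F X Y ≤ Fintype.card ι := by
  let E : Matrix (Fin l) (Fin m) K := of (Function.extend e Z 0)
  have hE : ∀ i ∉ Set.range e, E i = 0 := fun i hi =>
    Function.extend_apply' _ _ _ fun ⟨k, hk⟩ => hi ⟨k, hk⟩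
  have hZ : E.submatrix e id = Z := funext fun k => he.extend_apply Z 0 k
  refine (discAF_le_wtRows ?_).trans (Nat.cast_le.mpr (wtRows_le_card_of_forall_notMem_range E hE))
  rw [hY, ← hZ, submatrix_mul_submatrix_of_forall_notMem_range F E he hE]

theorem exists_discAF_le_discA (hNl : N ≤ l) (A : Matrix (Fin N) (Fin n) K)
    (X : Matrix (Fin n) (Fin m) K) (Y : Matrix (Fin N) (Fin m) K) :
    ∃ F : Matrix (Fin N) (Fin l) K, discAF A F X Y ≤ discA A X Y := by
  obtain ⟨D, Z, hY⟩ := discA_spec A X Y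
  have he := Fin.castLE_injective ((discA_le A X Y).trans hNl)
  obtain ⟨F, hF⟩ := exists_submatrix_id_eq D he
  exact ⟨F, by simpa using discAF_le_card he (hF ▸ hY)⟩

theorem deltaA_le_deltaAF (A : Matrix (Fin N) (Fin n) K) (F : Matrix (Fin N) (Fin l) K)
    (X X' : Matrix (Fin n) (Fin m) K) : (deltaA A X X' : ℕ∞) ≤ deltaAF A F X X' := by
  refine le_sInf fun _ ⟨Y, hc⟩ => hc ▸ ?_
  calc (deltaA A X X' : ℕ∞) ≤ ((discA A X Y + discA A X' Y : ℕ) : ℕ∞) :=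
        Nat.cast_le.mpr (deltaA_le_discA_add A X X' Y)
    _ ≤ discAF A F X Y + discAF A F X' Y := by
        push_cast; exact add_le_add (discA_le_discAF A F X Y) (discA_le_discAF A F X' Y)

theorem exists_deltaAF_le_deltaA (hNl : N ≤ l) (A : Matrix (Fin N) (Fin n) K)
    (X X' : Matrix (Fin n) (Fin m) K) :
    ∃ F : Matrix (Fin N) (Fin l) K, deltaAF A F X X' ≤ deltaA A X X' := by
  obtain ⟨Y, hδ⟩ := deltaA_spec A X X'
  obtain ⟨D₁, Z₁, hY₁⟩ := discA_spec A X Y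
  obtain ⟨D₂, Z₂, hY₂⟩ := discA_spec A X' Y
  let e := Fin.castLE (hδ ▸ (deltaA_le A X X').trans hNl) ∘ finSumFinEquiv
  have he : Function.Injective e := (Fin.castLE_injective _).comp finSumFinEquiv.injective
  obtain ⟨F, hF⟩ := exists_submatrix_id_eq (fromCols D₁ D₂) he
  have hF₁ : F.submatrix id (e ∘ Sum.inl) = D₁ := by
    ext j k; exact congrFun (congrFun hF j) (Sum.inl k)
  have hF₂ : F.submatrix id (e ∘ Sum.inr) = D₂ := by
    ext j k; exact congrFun (congrFun hF j) (Sum.inr k)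
  refine ⟨F, (deltaAF_le_discAF_add A F X X' Y).trans ?_⟩
  rw [hδ, Nat.cast_add]
  exact add_le_add (by simpa using discAF_le_card (he.comp Sum.inl_injective) (hF₁ ▸ hY₁))
    (by simpa using discAF_le_card (he.comp Sum.inr_injective) (hF₂ ▸ hY₂))

theorem deltaACode_le_deltaAFCode (A : Matrix (Fin N) (Fin n) K) (F : Matrix (Fin N) (Fin l) K)
    (C : Set (Matrix (Fin n) (Fin m) K)) : (deltaACode A C : ℕ∞) ≤ deltaAFCode A F C :=
  le_sInf fun _ ⟨X, hX, X', hX', hne, hc⟩ => hc ▸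
    (Nat.cast_le.mpr (deltaACode_le hX hX' hne)).trans (deltaA_le_deltaAF A F X X')

theorem exists_deltaAFCode_le_deltaACode (hNl : N ≤ l) (A : Matrix (Fin N) (Fin n) K)
    {C : Set (Matrix (Fin n) (Fin m) K)} (hC : ∃ X ∈ C, ∃ X' ∈ C, X ≠ X') :
    ∃ F : Matrix (Fin N) (Fin l) K, deltaAFCode A F C ≤ deltaACode A C := by
  obtain ⟨X, hX, X', hX', hne, hmin⟩ := deltaACode_spec A hC
  obtain ⟨F, hF⟩ := exists_deltaAF_le_deltaA hNl A X X'
  exact ⟨F, (deltaAFCode_le F hX hX' hne).trans (hmin ▸ hF)⟩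

end Discrepancy

theorem discA_eq_min_discAF_general {K : Type*} [Field K] [Fintype K] {n m N l : ℕ}
    (hNl : N ≤ l)
    (A : Matrix (Fin N) (Fin n) K)
    (C : Set (Matrix (Fin n) (Fin m) K)) (hC : ∃ X ∈ C, ∃ X' ∈ C, X ≠ X') :
    (∀ (X : Matrix (Fin n) (Fin m) K) (Y : Matrix (Fin N) (Fin m) K),
        (discA A X Y : ℕ∞) = ⨅ F : Matrix (Fin N) (Fin l) K, discAF A F X Y) ∧
      (∀ X X' : Matrix (Fin n) (Fin m) K,
        (deltaA A X X' : ℕ∞) = ⨅ F : Matrix (Fin N) (Fin l) K, deltaAF A F X X') ∧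
      (deltaACode A C : ℕ∞) = ⨅ F : Matrix (Fin N) (Fin l) K, deltaAFCode A F C :=
  ⟨fun X Y => (iInf_eq_of_forall_ge_of_exists_le (fun F => discA_le_discAF A F X Y)
      (exists_discAF_le_discA hNl A X Y)).symm,
    fun X X' => (iInf_eq_of_forall_ge_of_exists_le (fun F => deltaA_le_deltaAF A F X X')
      (exists_deltaAF_le_deltaA hNl A X X')).symm,
    (iInf_eq_of_forall_ge_of_exists_le (fun F => deltaACode_le_deltaAFCode A F C)
      (exists_deltaAFCode_le_deltaACode hNl A hC)).symm⟩

/-- If `ℓ ≥ N`, then `Δ_A(X,Y) = min_F Δ_{A,F}(X,Y)`; consequently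
`δ_A(X,X') = min_F δ_{A,F}(X,X')` and `δ_A(𝒞) = min_F δ_{A,F}(𝒞)`. -/
theorem discA_eq_min_discAF {K : Type*} [Field K] [Fintype K] {n m N l : ℕ}
    (hn : 0 < n) (hm : 0 < m) (hN : 0 < N) (hNl : N ≤ l)
    (A : Matrix (Fin N) (Fin n) K)
    (C : Set (Matrix (Fin n) (Fin m) K)) (hC : ∃ X ∈ C, ∃ X' ∈ C, X ≠ X') :
    (∀ (X : Matrix (Fin n) (Fin m) K) (Y : Matrix (Fin N) (Fin m) K),
        (discA A X Y : ℕ∞) = ⨅ F : Matrix (Fin N) (Fin l) K, discAF A F X Y) ∧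
      (∀ X X' : Matrix (Fin n) (Fin m) K,
        (deltaA A X X' : ℕ∞) = ⨅ F : Matrix (Fin N) (Fin l) K, deltaAF A F X X') ∧
      (deltaACode A C : ℕ∞) = ⨅ F : Matrix (Fin N) (Fin l) K, deltaAFCode A F C :=
  discA_eq_min_discAF_general hNl A C hC
end

section
/- Let ρ ∈ ℕ with N ≥ n and let 𝒞 ⊆ 𝔽_q^{n×m} be a code with at least two codewords such that no two distinct codewords of 𝒞 have the same row space. Then 𝒞 is guaranteed to correct t packet errors under rank deficiency ρ (i.e., 𝒞 is t-discrepancy-correcting for Δ_ρ) if and only if d_I(⟨𝒞⟩) > 2t + ρ, where d_I(⟨𝒞⟩) is the minimum injection distance between row spaces of distinct codewords. -/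
noncomputable def discRho {K : Type*} [Field K] [Fintype K] {n m N : ℕ}
    (ρ : ℕ) (X : Matrix (Fin n) (Fin m) K) (Y : Matrix (Fin N) (Fin m) K) : ℕ :=
  sInf {r : ℕ | ∃ A : Matrix (Fin N) (Fin n) K, n - ρ ≤ A.rank ∧ r = (Y - A * X).rank}

/-- The row space of a matrix: the span of its rows in `𝔽_q^m`. -/
noncomputable def rowSpace {K : Type*} [Field K] {a b : ℕ}
    (X : Matrix (Fin a) (Fin b) K) : Submodule K (Fin b → K) :=
  Submodule.span K (Set.range fun i => X i)

/-- The injection distance between two subspaces of `𝔽_q^m`: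
`d_I(U,V) = max {dim U, dim V} − dim (U ∩ V)`. -/
noncomputable def injDist {K : Type*} [Field K] {m : ℕ}
    (U V : Submodule K (Fin m → K)) : ℕ :=
  max (Module.finrank K U) (Module.finrank K V) - Module.finrank K ↥(U ⊓ V)

/-- `d_I(⟨𝒞⟩)`: the minimum injection distance between the row spaces of
distinct codewords. -/
noncomputable def injDistCode {K : Type*} [Field K] [Fintype K] {n m : ℕ}
    (C : Set (Matrix (Fin n) (Fin m) K)) : ℕ :=
  sInf {e : ℕ | ∃ X ∈ C, ∃ X' ∈ C, X ≠ X' ∧ e = injDist (rowSpace X) (rowSpace X')}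

/-- A code `C` is `t`-discrepancy-correcting for a discrepancy function `Δ` if
no output is within discrepancy `t` of two distinct codewords. -/
def Correcting {α β : Type*} (Δ : α → β → ℕ) (C : Set α) (t : ℕ) : Prop :=
  ∀ x ∈ C, ∀ x' ∈ C, x ≠ x' → ∀ y : β, ¬(Δ x y ≤ t ∧ Δ x' y ≤ t)

/-!
Write `f_M : v ↦ v M` for the linear map of a matrix `M`, so that `⟨M⟩ = range f_M`. For `N ≥ n`,
`Δ_ρ(X,Y) ≤ t` means exactly that `f_Y` lies within rank `t` of some map `z` into `⟨X⟩` of rank at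
least `dim ⟨X⟩ - ρ`: `z = f_X ∘ f_A` is such a map, and conversely any such `z` lifts through `f_X`
to some `f_A` of rank `rank z + dim ker f_X ≥ n - ρ`.

Such a `z` forces `dim ⟨Y⟩ ≤ dim (⟨X⟩ ⊓ ⟨Y⟩) + t` and `dim ⟨X⟩ ≤ dim (⟨X⟩ ⊓ ⟨Y⟩) + t + ρ`; for two
codewords these combine through
`dim (⟨X⟩ ⊓ ⟨Y⟩) + dim (⟨X'⟩ ⊓ ⟨Y⟩) ≤ dim (⟨X⟩ ⊓ ⟨X'⟩) + dim ⟨Y⟩` into `d_I(⟨X⟩, ⟨X'⟩) ≤ 2t + ρ`.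
Conversely, if `d_I(⟨X⟩, ⟨X'⟩) ≤ 2t + ρ`, complete `P = ⟨X⟩ ⊓ ⟨X'⟩` by at most `2t + ρ` directions
inside each of `⟨X⟩` and `⟨X'⟩`, pair up all but `ρ` of them on each side into at most `2t` pairs,
and let the rows of `Y` span `P`, follow `⟨X'⟩` on `t` of the pairs and `⟨X⟩` on the others.
-/

open Module Submodule LinearMap

section Subspaces

variable {K E : Type*} [Field K] [AddCommGroup E] [Module K E] [FiniteDimensional K E]

theorem finrank_le_finrank_add_finrank_inf_of_le_sup {A B T : Submodule K E} (h : A ≤ B ⊔ T) :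
    finrank K A ≤ finrank K B + finrank K ↥(A ⊓ T) := by
  have hAT := Submodule.finrank_sup_add_finrank_inf_eq A T
  have hBT := Submodule.finrank_add_le_finrank_add_finrank B T
  have hmono := Submodule.finrank_mono (sup_le h le_sup_right : A ⊔ T ≤ B ⊔ T)
  omega

theorem finrank_inf_add_finrank_inf_le (U V T : Submodule K E) :
    finrank K ↥(U ⊓ T) + finrank K ↥(V ⊓ T) ≤ finrank K ↥(U ⊓ V) + finrank K T := by
  have h := Submodule.finrank_sup_add_finrank_inf_eq (U ⊓ T) (V ⊓ T)
  have hsup := Submodule.finrank_mono (sup_le inf_le_right inf_le_right : U ⊓ T ⊔ V ⊓ T ≤ T)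
  have hinf := Submodule.finrank_mono
    (inf_le_inf inf_le_left inf_le_left : U ⊓ T ⊓ (V ⊓ T) ≤ U ⊓ V)
  omega

theorem exists_le_disjoint_finrank_add_eq {P U : Submodule K E} (hPU : P ≤ U) :
    ∃ Q ≤ U, Disjoint P Q ∧ finrank K P + finrank K Q = finrank K U := by
  obtain ⟨Q, hQ⟩ := P.exists_isCompl
  have hdisj : Disjoint P (Q ⊓ U) := hQ.disjoint.mono_right inf_le_left
  have hsup : P ⊔ Q ⊓ U = U := by rw [← sup_inf_assoc_of_le Q hPU, hQ.sup_eq_top, top_inf_eq]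
  refine ⟨Q ⊓ U, inf_le_right, hdisj, ?_⟩
  have h := Submodule.finrank_sup_add_finrank_inf_eq P (Q ⊓ U)
  rw [hsup, hdisj.eq_bot, finrank_bot] at h
  omega

end Subspaces

theorem exists_finrank_range_eq_min (K V W : Type*) [Field K] [AddCommGroup V] [Module K V]
    [FiniteDimensional K V] [AddCommGroup W] [Module K W] [FiniteDimensional K W] :
    ∃ a : V →ₗ[K] W, finrank K (range a) = min (finrank K V) (finrank K W) := by
  rcases le_total (finrank K V) (finrank K W) with h | h
  · obtain ⟨a, ha⟩ := finrank_le_iff_exists_linearMap.mp h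
    exact ⟨a, by rw [finrank_range_of_inj ha, min_eq_left h]⟩
  · obtain ⟨i, hi⟩ := finrank_le_iff_exists_linearMap.mp h
    obtain ⟨a, ha⟩ := i.exists_leftInverse_of_injective (ker_eq_bot.mpr hi)
    have htop : range a = ⊤ := range_eq_top.mpr fun w => ⟨i w, congr($ha w)⟩
    exact ⟨a, by rw [htop, finrank_top, min_eq_right h]⟩

section Maps

variable {K V W E : Type*} [Field K] [AddCommGroup V] [Module K V] [FiniteDimensional K V]
  [AddCommGroup W] [Module K W] [AddCommGroup E] [Module K E]

theorem finrank_map_add_finrank_inf_ker (f : V →ₗ[K] E) (p : Submodule K V) :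
    finrank K (p.map f) + finrank K ↥(p ⊓ ker f) = finrank K p := by
  have h := (f.domRestrict p).finrank_range_add_finrank_ker
  rwa [range_domRestrict, ker_domRestrict, ← p.finrank_map_subtype_eq,
    map_comap_subtype] at h

theorem finrank_range_le_finrank_range_comp_add (f : V →ₗ[K] E) (g : W →ₗ[K] V) :
    finrank K (range g) ≤ finrank K (range (f ∘ₗ g)) + finrank K (ker f) := by
  have h := finrank_map_add_finrank_inf_ker f (range g)
  have hker := Submodule.finrank_mono (inf_le_right : range g ⊓ ker f ≤ ker f)
  rw [← range_comp] at h
  omega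

theorem exists_comp_eq_of_range_le [FiniteDimensional K W] (f : V →ₗ[K] E) (z : W →ₗ[K] E)
    (hz : range z ≤ range f) (hker : finrank K (ker f) ≤ finrank K (ker z)) :
    ∃ β : W →ₗ[K] V, f ∘ₗ β = z ∧
      finrank K (range z) + finrank K (ker f) ≤ finrank K (range β) := by
  obtain ⟨σ, hσ⟩ := f.rangeRestrict.exists_rightInverse_of_surjective f.range_rangeRestrict
  have hfσ (u : range f) : f (σ u) = u := congrArg Subtype.val (LinearMap.congr_fun hσ u)
  obtain ⟨φ, hφ⟩ := exists_finrank_range_eq_min K (ker z) (ker f)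
  have hφ_top : range φ = ⊤ := eq_top_of_finrank_eq (by rw [hφ, min_eq_right hker])
  obtain ⟨κ, hκ⟩ := LinearMap.exists_extend φ
  set z' := z.codRestrict (range f) fun x => hz ⟨x, rfl⟩
  set β := σ ∘ₗ z' + (ker f).subtype ∘ₗ κ
  have hfβ : f ∘ₗ β = z := by
    ext x
    have hκx : f (κ x) = 0 := (κ x).2
    simp [β, z', hfσ, hκx]
  have hker_le : ker f ≤ range β := by
    intro k hk
    obtain ⟨x, hx⟩ : (⟨k, hk⟩ : ker f) ∈ range φ := hφ_top ▸ trivial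
    have hzx : z' x = 0 := Subtype.ext x.2
    have hκx : κ x = φ x := congr($hκ x)
    exact ⟨x, by simp [β, hzx, hκx, hx]⟩
  refine ⟨β, hfβ, ?_⟩
  have h := finrank_map_add_finrank_inf_ker f (range β)
  rw [← range_comp, hfβ, inf_eq_right.mpr hker_le] at h
  omega

end Maps

theorem exists_finrank_range_sub_le_of_prod {K G₁ G₂ E : Type*} [Field K] [AddCommGroup G₁]
    [Module K G₁] [FiniteDimensional K G₁] [AddCommGroup G₂] [Module K G₂] [FiniteDimensional K G₂]
    [AddCommGroup E] [Module K E] (a b : G₁ × G₂ →ₗ[K] E) :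
    ∃ c : G₁ × G₂ →ₗ[K] E, finrank K (range (c - a)) ≤ finrank K G₁ ∧
      finrank K (range (c - b)) ≤ finrank K G₂ := by
  set c := b ∘ₗ inl K G₁ G₂ ∘ₗ fst K G₁ G₂ + a ∘ₗ inr K G₁ G₂ ∘ₗ snd K G₁ G₂
  have hca : c - a = ((b - a) ∘ₗ inl K G₁ G₂) ∘ₗ fst K G₁ G₂ := by
    ext <;> simp [c, Prod.mk_zero_zero]
  have hcb : c - b = ((a - b) ∘ₗ inr K G₁ G₂) ∘ₗ snd K G₁ G₂ := by
    ext <;> simp [c, Prod.mk_zero_zero]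
  refine ⟨c, ?_, ?_⟩
  · rw [hca]
    exact (Submodule.finrank_mono (range_comp_le_range _ _)).trans (finrank_range_le _)
  · rw [hcb]
    exact (Submodule.finrank_mono (range_comp_le_range _ _)).trans (finrank_range_le _)

section Discrepancy

variable {K D E : Type*} [Field K] [AddCommGroup D] [Module K D] [AddCommGroup E] [Module K E]

/-- The linear-map form of `Δ_ρ(X, Y) ≤ t` (see `discRho_le_iff`): `U` plays `⟨X⟩`, `y` plays
`v ↦ v Y` and `z` plays `v ↦ v A X`. -/
def WithinDiscrepancy (ρ t : ℕ) (U : Submodule K E) (y : D →ₗ[K] E) : Prop :=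
  ∃ z : D →ₗ[K] E, range z ≤ U ∧ finrank K U ≤ finrank K (range z) + ρ ∧
    finrank K (range (y - z)) ≤ t

variable [FiniteDimensional K E]

theorem WithinDiscrepancy.finrank_le {ρ t : ℕ} {U : Submodule K E} {y : D →ₗ[K] E}
    (h : WithinDiscrepancy ρ t U y) :
    finrank K (range y) ≤ finrank K ↥(U ⊓ range y) + t ∧
      finrank K U ≤ finrank K ↥(U ⊓ range y) + t + ρ := by
  obtain ⟨z, hzU, hz, hyz⟩ := h
  have hy : range y ≤ range (y - z) ⊔ U := by
    rintro _ ⟨x, rfl⟩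
    rw [← sub_add_cancel (y x) (z x)]
    exact add_mem (mem_sup_left ⟨x, rfl⟩) (mem_sup_right (hzU ⟨x, rfl⟩))
  have hz' : range z ≤ range (y - z) ⊔ range y := by
    rintro _ ⟨x, rfl⟩
    rw [← sub_sub_cancel (y x) (z x)]
    exact sub_mem (mem_sup_right ⟨x, rfl⟩) (mem_sup_left ⟨x, rfl⟩)
  have h₁ := finrank_le_finrank_add_finrank_inf_of_le_sup hy
  have h₂ := finrank_le_finrank_add_finrank_inf_of_le_sup hz'
  have h₃ := Submodule.finrank_mono (inf_le_inf_right (range y) hzU)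
  rw [inf_comm] at h₁
  omega

theorem finrank_le_of_withinDiscrepancy {ρ t : ℕ} {U V : Submodule K E} {y : D →ₗ[K] E}
    (hU : WithinDiscrepancy ρ t U y) (hV : WithinDiscrepancy ρ t V y) :
    finrank K U ≤ finrank K ↥(U ⊓ V) + (2 * t + ρ) := by
  have h := finrank_inf_add_finrank_inf_le U V (range y)
  have hU' := hU.finrank_le
  have hV' := hV.finrank_le
  omega

theorem withinDiscrepancy_coprod_comp {G : Type*} [AddCommGroup G] [Module K G] {ρ t : ℕ}
    {P Q U : Submodule K E} (hPU : P ≤ U) (hQU : Q ≤ U) (hPQ : Disjoint P Q)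
    (e : D →ₗ[K] P × G) (he : range e = ⊤) (a : G →ₗ[K] Q) (c : G →ₗ[K] E)
    (ha : finrank K U ≤ finrank K P + finrank K (range a) + ρ)
    (hc : finrank K (range (c - Q.subtype ∘ₗ a)) ≤ t) :
    WithinDiscrepancy ρ t U (P.subtype.coprod c ∘ₗ e) := by
  have hrange : range (P.subtype.coprod (Q.subtype ∘ₗ a) ∘ₗ e) = P ⊔ (range a).map Q.subtype := by
    rw [range_comp_of_range_eq_top _ he, range_coprod, range_subtype, range_comp]
  have hdisj : Disjoint P ((range a).map Q.subtype) := hPQ.mono_right (map_subtype_le Q _)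
  refine ⟨P.subtype.coprod (Q.subtype ∘ₗ a) ∘ₗ e, ?_, ?_, ?_⟩
  · rw [hrange]
    exact sup_le hPU ((map_subtype_le Q _).trans hQU)
  · have h := Submodule.finrank_sup_add_finrank_inf_eq P ((range a).map Q.subtype)
    rw [hdisj.eq_bot, finrank_bot, finrank_map_subtype_eq, ← hrange] at h
    omega
  · refine (Submodule.finrank_mono ?_).trans hc
    rintro _ ⟨x, rfl⟩
    exact ⟨(e x).2, by simp⟩

theorem exists_withinDiscrepancy_of_finrank_le [FiniteDimensional K D] {ρ t : ℕ}
    {U V : Submodule K E} (hUD : finrank K U ≤ finrank K D) (hVD : finrank K V ≤ finrank K D)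
    (hU : finrank K U ≤ finrank K ↥(U ⊓ V) + (2 * t + ρ))
    (hV : finrank K V ≤ finrank K ↥(U ⊓ V) + (2 * t + ρ)) :
    ∃ y : D →ₗ[K] E, WithinDiscrepancy ρ t U y ∧ WithinDiscrepancy ρ t V y := by
  obtain ⟨QU, hQU, hPQU, hdimU⟩ := exists_le_disjoint_finrank_add_eq (inf_le_left : U ⊓ V ≤ U)
  obtain ⟨QV, hQV, hPQV, hdimV⟩ := exists_le_disjoint_finrank_add_eq (inf_le_right : U ⊓ V ≤ V)
  -- `G₁ × G₂` indexes the `M ≤ 2 * t` pairs; `y` follows `V` on `G₁` and `U` on `G₂`.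
  set M := max (finrank K U) (finrank K V) - ρ - finrank K ↥(U ⊓ V)
  set G₁ := Fin (min t M) → K
  set G₂ := Fin (M - min t M) → K
  have hG₁ : finrank K G₁ = min t M := finrank_fin_fun K
  have hG₂ : finrank K G₂ = M - min t M := finrank_fin_fun K
  obtain ⟨e, he⟩ := exists_finrank_range_eq_min K D (↥(U ⊓ V) × (G₁ × G₂))
  have he_top : range e = ⊤ := by
    apply eq_top_of_finrank_eq
    rw [he, finrank_prod, finrank_prod, hG₁, hG₂]
    omega
  obtain ⟨a, ha⟩ := exists_finrank_range_eq_min K (G₁ × G₂) QU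
  obtain ⟨b, hb⟩ := exists_finrank_range_eq_min K (G₁ × G₂) QV
  obtain ⟨c, hca, hcb⟩ := exists_finrank_range_sub_le_of_prod (QU.subtype ∘ₗ a) (QV.subtype ∘ₗ b)
  rw [finrank_prod, hG₁, hG₂] at ha hb
  rw [hG₁] at hca
  rw [hG₂] at hcb
  refine ⟨(U ⊓ V).subtype.coprod c ∘ₗ e,
    withinDiscrepancy_coprod_comp inf_le_left hQU hPQU e he_top a c ?_ (hca.trans (by omega)),
    withinDiscrepancy_coprod_comp inf_le_right hQV hPQV e he_top b c ?_ (hcb.trans (by omega))⟩ <;>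
  omega

end Discrepancy

section Matrices

variable {K : Type*} [Field K]

theorem rowSpace_eq_range {a b : ℕ} (M : Matrix (Fin a) (Fin b) K) :
    rowSpace M = range M.toLinearMapRight' :=
  (range_vecMulLinear M).symm

theorem Matrix.rank_eq_finrank_range_toLinearMapRight' {a b : ℕ}
    (M : Matrix (Fin a) (Fin b) K) : M.rank = finrank K (range M.toLinearMapRight') := by
  rw [Matrix.rank_eq_finrank_span_row, ← rowSpace_eq_range]
  rfl

theorem Matrix.toLinearMapRight'_sub_mul {n m N : ℕ} (Y : Matrix (Fin N) (Fin m) K)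
    (A : Matrix (Fin N) (Fin n) K) (X : Matrix (Fin n) (Fin m) K) :
    (Y - A * X).toLinearMapRight' =
      Y.toLinearMapRight' - X.toLinearMapRight' ∘ₗ A.toLinearMapRight' := by
  rw [map_sub, Matrix.toLinearMapRight'_mul]

theorem injDist_le_iff {m : ℕ} (U V : Submodule K (Fin m → K)) (k : ℕ) :
    injDist U V ≤ k ↔
      finrank K U ≤ finrank K ↥(U ⊓ V) + k ∧ finrank K V ≤ finrank K ↥(U ⊓ V) + k := by
  rw [injDist]
  omega

variable [Fintype K]

theorem discRho_le_iff {n m N : ℕ} (hnN : n ≤ N) (ρ t : ℕ) (X : Matrix (Fin n) (Fin m) K)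
    (Y : Matrix (Fin N) (Fin m) K) :
    discRho ρ X Y ≤ t ↔ WithinDiscrepancy ρ t (rowSpace X) Y.toLinearMapRight' := by
  have hX := X.toLinearMapRight'.finrank_range_add_finrank_ker
  rw [finrank_fin_fun, ← rowSpace_eq_range] at hX
  constructor
  · intro h
    have hne : {r : ℕ | ∃ A : Matrix (Fin N) (Fin n) K,
        n - ρ ≤ A.rank ∧ r = (Y - A * X).rank}.Nonempty := by
      obtain ⟨β, hβ⟩ := exists_finrank_range_eq_min K (Fin N → K) (Fin n → K)
      refine ⟨_, Matrix.toLinearMapRight'.symm β, ?_, rfl⟩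
      rw [Matrix.rank_eq_finrank_range_toLinearMapRight', LinearEquiv.apply_symm_apply, hβ]
      simp [hnN]
    obtain ⟨A, hA, hrank⟩ := Nat.sInf_mem hne
    rw [Matrix.rank_eq_finrank_range_toLinearMapRight'] at hA
    rw [discRho, hrank, Matrix.rank_eq_finrank_range_toLinearMapRight',
      Matrix.toLinearMapRight'_sub_mul] at h
    have hA' := finrank_range_le_finrank_range_comp_add X.toLinearMapRight' A.toLinearMapRight'
    exact ⟨_, (range_comp_le_range _ _).trans (rowSpace_eq_range X).ge, by omega, h⟩
  · rintro ⟨z, hzX, hz, hyz⟩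
    have hker : finrank K (ker X.toLinearMapRight') ≤ finrank K (ker z) := by
      have hz' := z.finrank_range_add_finrank_ker
      have hzX' := Submodule.finrank_mono hzX
      rw [finrank_fin_fun] at hz'
      omega
    obtain ⟨β, hβz, hβ⟩ := exists_comp_eq_of_range_le X.toLinearMapRight' z
      (hzX.trans (rowSpace_eq_range X).le) hker
    set A := Matrix.toLinearMapRight'.symm β
    have hAβ : A.toLinearMapRight' = β := LinearEquiv.apply_symm_apply _ β
    have hA : n - ρ ≤ A.rank := by
      rw [Matrix.rank_eq_finrank_range_toLinearMapRight', hAβ]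
      omega
    refine le_trans (Nat.sInf_le ⟨A, hA, rfl⟩) ?_
    rwa [Matrix.rank_eq_finrank_range_toLinearMapRight', Matrix.toLinearMapRight'_sub_mul, hAβ,
      hβz]

theorem exists_discRho_le_iff_injDist_le {n m N : ℕ} (hnN : n ≤ N) (ρ t : ℕ)
    (X X' : Matrix (Fin n) (Fin m) K) :
    (∃ Y : Matrix (Fin N) (Fin m) K, discRho ρ X Y ≤ t ∧ discRho ρ X' Y ≤ t) ↔
      injDist (rowSpace X) (rowSpace X') ≤ 2 * t + ρ := by
  simp only [discRho_le_iff hnN, injDist_le_iff]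
  constructor
  · rintro ⟨Y, hX, hX'⟩
    exact ⟨finrank_le_of_withinDiscrepancy hX hX',
      inf_comm (rowSpace X) _ ▸ finrank_le_of_withinDiscrepancy hX' hX⟩
  · rintro ⟨hX, hX'⟩
    have hdim (M : Matrix (Fin n) (Fin m) K) :
        finrank K (rowSpace M) ≤ finrank K (Fin N → K) := by
      rw [rowSpace_eq_range, finrank_fin_fun]
      exact (finrank_range_le _).trans (by rw [finrank_fin_fun]; exact hnN)
    obtain ⟨y, hy⟩ := exists_withinDiscrepancy_of_finrank_le (hdim X) (hdim X') hX hX'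
    exact ⟨Matrix.toLinearMapRight'.symm y, by rwa [LinearEquiv.apply_symm_apply]⟩

theorem lt_injDistCode_iff {n m : ℕ} {C : Set (Matrix (Fin n) (Fin m) K)}
    (hC : ∃ X ∈ C, ∃ X' ∈ C, X ≠ X') (k : ℕ) :
    k < injDistCode C ↔
      ∀ X ∈ C, ∀ X' ∈ C, X ≠ X' → k < injDist (rowSpace X) (rowSpace X') := by
  refine ⟨fun h X hX X' hX' hne => h.trans_le (Nat.sInf_le ⟨X, hX, X', hX', hne, rfl⟩),
    fun h => ?_⟩
  obtain ⟨X, hX, X', hX', hne⟩ := hC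
  obtain ⟨Z, hZ, Z', hZ', hZne, heq⟩ := Nat.sInf_mem (s := {e : ℕ | ∃ X ∈ C, ∃ X' ∈ C,
    X ≠ X' ∧ e = injDist (rowSpace X) (rowSpace X')}) ⟨_, X, hX, X', hX', hne, rfl⟩
  rw [injDistCode, heq]
  exact h Z hZ Z' hZ' hZne

end Matrices

theorem correcting_iff_injDistCode_general {K : Type*} [Field K] [Fintype K] {n m N : ℕ}
    (hnN : n ≤ N) (ρ : ℕ)
    (C : Set (Matrix (Fin n) (Fin m) K)) (hC : ∃ X ∈ C, ∃ X' ∈ C, X ≠ X')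
    (t : ℕ) :
    Correcting (fun X (Y : Matrix (Fin N) (Fin m) K) => discRho ρ X Y) C t ↔
      2 * t + ρ < injDistCode C := by
  rw [lt_injDistCode_iff hC]
  refine forall₂_congr fun X _ => forall₂_congr fun X' _ => imp_congr_right fun _ => ?_
  rw [← not_le, ← exists_discRho_le_iff_injDist_le hnN, not_exists]

/-- A code with at least two codewords, no two distinct codewords of which
have the same row space, corrects `t` packet errors under rank deficiency `ρ`
(is `t`-discrepancy-correcting for `Δ_ρ`) if and only if
`d_I(⟨𝒞⟩) > 2t + ρ`. -/
theorem correcting_iff_injDistCode {K : Type*} [Field K] [Fintype K] {n m N : ℕ}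
    (hn : 0 < n) (hm : 0 < m) (hN : 0 < N) (hnN : n ≤ N) (ρ : ℕ)
    (C : Set (Matrix (Fin n) (Fin m) K)) (hC : ∃ X ∈ C, ∃ X' ∈ C, X ≠ X')
    (hinj : ∀ X ∈ C, ∀ X' ∈ C, rowSpace X = rowSpace X' → X = X')
    (t : ℕ) :
    Correcting (fun X (Y : Matrix (Fin N) (Fin m) K) => discRho ρ X Y) C t ↔
      2 * t + ρ < injDistCode C :=
  correcting_iff_injDistCode_general hnN ρ C hC t
end
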